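/- Let f = Σ_{r=0}^n x_r^{d_1} g_r be a CW-Nagata polynomial of bidegree (d_1,d_2), with g_r = u_1^{r_1}⋯u_m^{r_m}. The ideal Ann(f) of T is generated by the following elements: (1) the products X_iX_j for 0 ≤ i < j ≤ n and the powers X_k^{d_1+1} for 0 ≤ k ≤ n; (2) all monic monomials of degree d_2+1 in U_1,…,U_m; (3) for each 1 ≤ j ≤ d_2, the monomials U_1^{s_1}⋯U_m^{s_m} with s_1+⋯+s_m = j such that u_1^{s_1}⋯u_m^{s_m} divides no g_r and is minimal (with respect to divisibility) with this property; (4) the monomials X_rU_i such that u_i does not divide g_r; (5) for each 1 ≤ j ≤ d_2, the monomials X_s·U_1^{t_1}⋯U_m^{t_m} with t_1+⋯+t_m = j such that u_1^{t_1}⋯u_m^{t_m} is minimal (with respect to divisibility) among the monomials not dividing g_s; (6) the binomials X_r^{d_1}U_1^{ρ_1}⋯U_m^{ρ_m} − X_s^{d_1}U_1^{σ_1}⋯U_m^{σ_m}, where ρ_1+⋯+ρ_m = σ_1+⋯+σ_m, g_{r,s} = gcd(g_r,g_s), g_r = u_1^{ρ_1}⋯u_m^{ρ_m}·g_{r,s}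 and g_s = u_1^{σ_1}⋯u_m^{σ_m}·g_{r,s}. -/

import Mathlib

open MvPolynomial

namespace CW

variable {σ K : Type*} [CommSemiring K]

/-- A generic "monomial contraction-type" action of the polynomial ring on itself,
determined by a structure coefficient `ν c a` (the coefficient produced when the
operator monomial with exponent `a` acts on the monomial with exponent `c`). -/
noncomputable def genAct (ν : (σ →₀ ℕ) → (σ →₀ ℕ) → K) (α f : MvPolynomial σ K) :
    MvPolynomial σ K :=
  Finsupp.sum (AddMonoidAlgebra.coeff α) fun a ca => Finsupp.sum (AddMonoidAlgebra.coeff f) fun c cf => monomial (c - a) (ν c a * (ca * cf))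

theorem genAct_zero_left (ν : (σ →₀ ℕ) → (σ →₀ ℕ) → K) (f : MvPolynomial σ K) :
    genAct ν 0 f = 0 :=
  Finsupp.sum_zero_index

theorem genAct_zero_right (ν : (σ →₀ ℕ) → (σ →₀ ℕ) → K) (α : MvPolynomial σ K) :
    genAct ν α 0 = 0 := by
  unfold genAct
  simp only [AddMonoidAlgebra.coeff_zero, Finsupp.sum_zero_index]
  simp [Finsupp.sum]

theorem genAct_add_left (ν : (σ →₀ ℕ) → (σ →₀ ℕ) → K) (α β f : MvPolynomial σ K) :
    genAct ν (α + β) f = genAct ν α f + genAct ν β f := by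
  unfold genAct
  rw [AddMonoidAlgebra.coeff_add]
  apply Finsupp.sum_add_index'
  · intro a
    simp [Finsupp.sum]
  · intro a b₁ b₂
    rw [← Finsupp.sum_add]
    apply Finsupp.sum_congr
    intro c _
    rw [add_mul, mul_add, map_add]

theorem genAct_add_right (ν : (σ →₀ ℕ) → (σ →₀ ℕ) → K) (α f g : MvPolynomial σ K) :
    genAct ν α (f + g) = genAct ν α f + genAct ν α g := by
  unfold genAct
  rw [← Finsupp.sum_add]
  apply Finsupp.sum_congr
  intro a _
  rw [AddMonoidAlgebra.coeff_add]
  apply Finsupp.sum_add_index'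
  · intro c
    simp only [mul_zero, map_zero]
  · intro c c₁ c₂
    rw [mul_add, mul_add, map_add]

theorem genAct_monomial (ν : (σ →₀ ℕ) → (σ →₀ ℕ) → K) (a c : σ →₀ ℕ) (r s : K) :
    genAct ν (monomial a r) (monomial c s) = monomial (c - a) (ν c a * (r * s)) := by
  unfold genAct
  rw [← single_eq_monomial a r, ← single_eq_monomial c s]
  simp only [AddMonoidAlgebra.coeff_single]
  rw [Finsupp.sum_single_index, Finsupp.sum_single_index]
  · simp only [mul_zero, map_zero]
  · simp [Finsupp.sum]

theorem genAct_mul {ν : (σ →₀ ℕ) → (σ →₀ ℕ) → K}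
    (hν : ∀ c a b, ν c (a + b) = ν c b * ν (c - b) a) (α β f : MvPolynomial σ K) :
    genAct ν (α * β) f = genAct ν α (genAct ν β f) := by
  induction α using MvPolynomial.induction_on' with
  | add p q hp hq => rw [add_mul, genAct_add_left, hp, hq, genAct_add_left]
  | monomial a r =>
    induction β using MvPolynomial.induction_on' with
    | add p q hp hq =>
      rw [mul_add, genAct_add_left, hp, hq, ← genAct_add_right, genAct_add_left]
    | monomial b s =>
      induction f using MvPolynomial.induction_on' with
      | add p q hp hq =>
        rw [genAct_add_right, hp, hq, ← genAct_add_right, ← genAct_add_right]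
      | monomial c t =>
        rw [monomial_mul, genAct_monomial, genAct_monomial, genAct_monomial,
          show c - (a + b) = c - b - a from by rw [tsub_tsub, add_comm], hν]
        congr 1
        ring

/-- The annihilator ideal of `f` under the action `genAct ν`. -/
noncomputable def annG (ν : (σ →₀ ℕ) → (σ →₀ ℕ) → K)
    (hν : ∀ c a b, ν c (a + b) = ν c b * ν (c - b) a) (f : MvPolynomial σ K) :
    Ideal (MvPolynomial σ K) where
  carrier := {α | genAct ν α f = 0}
  zero_mem' := genAct_zero_left ν f
  add_mem' := by
    intro a b ha hb
    show genAct ν (a + b) f = 0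
    rw [genAct_add_left, ha, hb, add_zero]
  smul_mem' := by
    intro c α hα
    show genAct ν (c * α) f = 0
    rw [genAct_mul hν, hα, genAct_zero_right]

/-- Structure coefficient of the contraction (apolarity) action: `X^a` sends `x^c`
to `x^(c-a)` if `a ≤ c` and to `0` otherwise. -/
noncomputable def cnu (c a : σ →₀ ℕ) : K :=
  open scoped Classical in if a ≤ c then 1 else 0

theorem cnu_mul (c a b : σ →₀ ℕ) :
    (cnu c (a + b) : K) = cnu c b * cnu (c - b) a := by
  classical
  unfold cnu
  by_cases hb : b ≤ c
  · by_cases ha : a ≤ c - b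
    · have h : a + b ≤ c := (le_tsub_iff_right hb).mp ha
      simp [hb, ha, h]
    · have h : ¬ a + b ≤ c := fun h => ha ((le_tsub_iff_right hb).mpr h)
      simp [hb, ha, h]
  · have h : ¬ a + b ≤ c := fun h => hb (le_trans le_add_self h)
    simp [hb, h]

/-- The contraction action `α ∘ f`. -/
noncomputable def cAct (α f : MvPolynomial σ K) : MvPolynomial σ K :=
  genAct cnu α f

/-- The annihilator `Ann(f)` of `f` under the contraction action, as an ideal. -/
noncomputable def cAnn (f : MvPolynomial σ K) : Ideal (MvPolynomial σ K) :=
  annG cnu cnu_mul f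

theorem mem_cAnn {f α : MvPolynomial σ K} : α ∈ cAnn f ↔ cAct α f = 0 := Iff.rfl

/-- The `K`-submodule of polynomials all of whose monomials satisfy `P`. -/
noncomputable def bihom (K : Type*) [CommSemiring K] {σ : Type*} (P : (σ →₀ ℕ) → Prop) :
    Submodule K (MvPolynomial σ K) where
  carrier := {p | ∀ c ∈ p.support, P c}
  zero_mem' := by
    intro c hc
    simp at hc
  add_mem' := by
    classical
    intro p q hp hq c hc
    rcases Finset.mem_union.mp (MvPolynomial.support_add hc) with h | h
    · exact hp c h
    · exact hq c h
  smul_mem' := by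
    intro k p hp c hc
    exact hp c (MvPolynomial.support_smul hc)

/-- The x-degree of an exponent vector. -/
def degX {n m : ℕ} (c : (Fin (n + 1) ⊕ Fin m) →₀ ℕ) : ℕ := ∑ r, c (Sum.inl r)

/-- The u-degree of an exponent vector. -/
def degU {n m : ℕ} (c : (Fin (n + 1) ⊕ Fin m) →₀ ℕ) : ℕ := ∑ k, c (Sum.inr k)

/-- The bihomogeneous component `T_(i,j)`. -/
noncomputable def Tbi (K : Type*) [CommSemiring K] {n m : ℕ} (i j : ℕ) :
    Submodule K (MvPolynomial (Fin (n + 1) ⊕ Fin m) K) :=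
  bihom K fun c => degX c = i ∧ degU c = j

/-- The bigraded component `A_(i,j)` of `A = T ⧸ Ann(f)`: the image of `T_(i,j)`
in the quotient. -/
noncomputable def Abi {K : Type*} [Field K] {n m : ℕ}
    (f : MvPolynomial (Fin (n + 1) ⊕ Fin m) K) (i j : ℕ) :
    Submodule K (MvPolynomial (Fin (n + 1) ⊕ Fin m) K ⧸ cAnn f) :=
  (Tbi K i j).map (Ideal.Quotient.mkₐ K (cAnn f)).toLinearMap


/-!
The CW-Nagata polynomial is a sum `f = ∑ᵣ x^{Eᵣ}` of distinct monomials, `Eᵣ = d₁ eᵣ + gᵣ`.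
For such an `f`, the coefficient of `x^w` in `α ∘ f` is `∑_{w ≤ Eᵣ} α_{Eᵣ - w}`. Hence an
annihilating `α` can be stripped, one monomial of its support at a time, of pieces of two kinds:
a monomial dividing no term of `f`, or a combination `∑ᵣ cᵣ x^{Eᵣ - w}` with `∑ᵣ cᵣ = 0`, which is
a combination of differences `x^{Eᵣ - w} - x^{Eₛ - w}`. So `Ann(f)` is generated by any ideal
inside `Ann(f)` that contains these monomials and differences.

For the CW-Nagata polynomial, a monomial dividing no term is a multiple of a generator of type
(1), (2), (3) or (5), according to whether its `x`-part divides no `x_r^{d₁}`, its `u`-part has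
degree `> d₂`, or else its `x`-part is `1` or a power of one `x_r`. A common divisor `x^w` of two
distinct terms is a `u`-monomial dividing `gcd(g_r, g_s)`, so the difference is a multiple of the
binomial (6). Conversely every generator kills `f`, by a direct computation.
-/

theorem _root_.Submodule.sum_smul_mem_of_sub_mem {ι R M : Type*} [Ring R] [AddCommGroup M]
    [Module R M] (p : Submodule R M) {s : Finset ι} {v : ι → M}
    (hv : ∀ i ∈ s, ∀ j ∈ s, i ≠ j → v i - v j ∈ p) {c : ι → R} (hc : ∑ i ∈ s, c i = 0) :
    ∑ i ∈ s, c i • v i ∈ p := by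
  obtain rfl | ⟨j, hj⟩ := s.eq_empty_or_nonempty
  · simp
  have : ∑ i ∈ s, c i • v i = ∑ i ∈ s, c i • (v i - v j) + (∑ i ∈ s, c i) • v j := by
    simp [smul_sub, Finset.sum_sub_distrib, Finset.sum_smul]
  rw [this, hc, zero_smul, add_zero]
  refine p.sum_mem fun i hi => p.smul_mem _ ?_
  obtain rfl | hij := eq_or_ne i j
  · simp
  · exact hv i hi j hj hij

@[simp]
theorem _root_.Finsupp.mapDomain_inr_apply_inl {α β M : Type*} [AddCommMonoid M] (t : β →₀ M)
    (a : α) : t.mapDomain Sum.inr (Sum.inl a : α ⊕ β) = 0 :=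
  Finsupp.mapDomain_of_notMem_range _ _ (by simp)

@[simp]
theorem _root_.Finsupp.mapDomain_inr_apply_inr {α β M : Type*} [AddCommMonoid M] (t : β →₀ M)
    (b : β) : t.mapDomain Sum.inr (Sum.inr b : α ⊕ β) = t b :=
  Finsupp.mapDomain_apply Sum.inr_injective _ _

theorem _root_.Finsupp.exists_eq_mapDomain_inr {α β M : Type*} [AddCommMonoid M]
    (w : α ⊕ β →₀ M) (h : ∀ a, w (Sum.inl a) = 0) : ∃ v : β →₀ M, w = v.mapDomain Sum.inr :=
  ⟨w.comapDomain Sum.inr Sum.inr_injective.injOn, by ext (a | b) <;> simp [h]⟩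

theorem _root_.Finsupp.exists_eq_single_inl_add_mapDomain_inr {α β M : Type*} [AddCommMonoid M]
    (w : α ⊕ β →₀ M) {r : α} (h : ∀ a ≠ r, w (Sum.inl a) = 0) :
    ∃ v : β →₀ M, w = Finsupp.single (Sum.inl r) (w (Sum.inl r)) + v.mapDomain Sum.inr := by
  classical
  refine ⟨w.comapDomain Sum.inr Sum.inr_injective.injOn, ?_⟩
  ext (a | b)
  · obtain rfl | ha := eq_or_ne a r
    · simp
    · simp [ha.symm, h a ha]
  · simp

theorem _root_.Finsupp.one_le_sum_apply_of_ne_zero {ι : Type*} [Fintype ι] {s : ι →₀ ℕ}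
    (hs : s ≠ 0) : 1 ≤ ∑ k, s k := by
  rw [← Finsupp.degree_eq_sum]
  exact Nat.one_le_iff_ne_zero.mpr ((Finsupp.degree_eq_zero_iff s).not.mpr hs)

section Semiring

variable {R : Type*} [CommSemiring R]

theorem X_mul_X_eq_monomial (i j : σ) :
    (X i * X j : MvPolynomial σ R) = monomial (Finsupp.single i 1 + Finsupp.single j 1) 1 := by
  rw [X, X, monomial_mul, one_mul]

theorem monomial_mem_span_of_le {G : Set (MvPolynomial σ R)} {a b : σ →₀ ℕ} (hba : b ≤ a)
    (hb : monomial b 1 ∈ G) : monomial a (1 : R) ∈ Ideal.span G := by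
  rw [← tsub_add_cancel_of_le hba, ← mul_one (1 : R), ← monomial_mul]
  exact Ideal.mul_mem_left _ _ (Ideal.subset_span hb)

theorem cAct_sum_right {ι : Type*} (α : MvPolynomial σ R) (s : Finset ι)
    (h : ι → MvPolynomial σ R) : cAct α (∑ i ∈ s, h i) = ∑ i ∈ s, cAct α (h i) :=
  let cActHom : MvPolynomial σ R →+ MvPolynomial σ R :=
    { toFun := cAct α, map_zero' := genAct_zero_right cnu α, map_add' := genAct_add_right cnu α }
  map_sum cActHom h s

theorem cAct_monomial_monomial (a e : σ →₀ ℕ) (c : R) :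
    cAct (monomial a c) (monomial e 1) = if a ≤ e then monomial (e - a) c else 0 := by
  classical
  rw [cAct, genAct_monomial, cnu]
  split_ifs <;> simp

theorem coeff_cAct_monomial (α : MvPolynomial σ R) (e w : σ →₀ ℕ) :
    coeff w (cAct α (monomial e 1)) = if w ≤ e then coeff (e - w) α else 0 := by
  classical
  induction α using MvPolynomial.induction_on' with
  | monomial a c =>
    rw [cAct_monomial_monomial, apply_ite (coeff w), coeff_monomial, coeff_monomial, coeff_zero]
    by_cases ha : a ≤ e <;> by_cases hw : w ≤ e
    · simp only [ha, hw, if_true, eq_tsub_iff_add_eq_of_le, eq_comm, add_comm]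
    · rw [if_pos ha, if_neg hw, if_neg (by rintro rfl; exact hw tsub_le_self)]
    · rw [if_neg ha, if_pos hw, if_neg (by rintro rfl; exact ha tsub_le_self)]
    · rw [if_neg ha, if_neg hw]
  | add p q hp hq =>
    rw [cAct, genAct_add_left, coeff_add, ← cAct, ← cAct, hp, hq, coeff_add]
    split_ifs <;> simp

open Classical in
theorem coeff_sum_coeff_smul_monomial {ι : Type*} (α : MvPolynomial σ R) (s : Finset ι)
    (e : ι → σ →₀ ℕ) (b : σ →₀ ℕ) :
    coeff b (∑ i ∈ s, coeff (e i) α • monomial (e i) (1 : R)) =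
      ∑ i ∈ s, if e i = b then coeff b α else 0 := by
  rw [coeff_sum]
  refine Finset.sum_congr rfl fun i _ => ?_
  rw [coeff_smul, coeff_monomial]
  split_ifs with h <;> simp [h]

variable {ι : Type*} [Fintype ι]

theorem cAct_monomial_sum_monomial (E : ι → σ →₀ ℕ) (a : σ →₀ ℕ) (c : R) :
    cAct (monomial a c) (∑ i, monomial (E i) 1) =
      ∑ i, if a ≤ E i then monomial (E i - a) c else 0 := by
  rw [cAct_sum_right]
  exact Finset.sum_congr rfl fun i _ => cAct_monomial_monomial a (E i) c

theorem coeff_cAct_sum_monomial (E : ι → σ →₀ ℕ) (α : MvPolynomial σ R) (w : σ →₀ ℕ) :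
    coeff w (cAct α (∑ i, monomial (E i) 1)) =
      ∑ i, if w ≤ E i then coeff (E i - w) α else 0 := by
  rw [cAct_sum_right, coeff_sum]
  exact Finset.sum_congr rfl fun i _ => coeff_cAct_monomial α (E i) w

theorem monomial_mem_cAnn_sum_monomial {E : ι → σ →₀ ℕ} {a : σ →₀ ℕ} (c : R)
    (ha : ∀ i, ¬ a ≤ E i) : monomial a c ∈ cAnn (∑ i, monomial (E i) 1) := by
  rw [mem_cAnn, cAct_monomial_sum_monomial]
  exact Finset.sum_eq_zero fun i _ => if_neg (ha i)

theorem cAct_monomial_sum_monomial_of_unique {E : ι → σ →₀ ℕ} {a : σ →₀ ℕ} {r : ι}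
    (hr : a ≤ E r) (hunique : ∀ i ≠ r, ¬ a ≤ E i) (c : R) :
    cAct (monomial a c) (∑ i, monomial (E i) 1) = monomial (E r - a) c := by
  rw [cAct_monomial_sum_monomial, Finset.sum_eq_single r (fun i _ hi => if_neg (hunique i hi))
    (by simp), if_pos hr]

end Semiring

section Ring

variable {R : Type*} [CommRing R]

theorem cAct_sub_left (p q f : MvPolynomial σ R) : cAct (p - q) f = cAct p f - cAct q f :=
  eq_sub_of_add_eq <| by unfold cAct; rw [← genAct_add_left, sub_add_cancel]

theorem ideal_le_of_forall_exists_coeff_eq {I J : Ideal (MvPolynomial σ R)} (hJI : J ≤ I)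
    (h : ∀ α ∈ I, ∀ a ∈ α.support,
      ∃ β ∈ J, β.support ⊆ α.support ∧ coeff a β = coeff a α) :
    I ≤ J := by
  classical
  suffices ∀ N, ∀ α ∈ I, α.support.card ≤ N → α ∈ J from fun α hα => this _ α hα le_rfl
  intro N
  induction N with
  | zero =>
    intro α _ hα
    rw [Nat.le_zero, Finset.card_eq_zero, support_eq_empty] at hα
    exact hα ▸ J.zero_mem
  | succ N ih =>
    intro α hα hcard
    obtain hα0 | ⟨a, ha⟩ := α.support.eq_empty_or_nonempty
    · exact support_eq_empty.mp hα0 ▸ J.zero_mem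
    obtain ⟨β, hβ, hsupp, hcoeff⟩ := h α hα a ha
    have hsub : (α - β).support ⊆ α.support.erase a := fun b hb => by
      rw [mem_support_iff, coeff_sub, sub_ne_zero] at hb
      refine Finset.mem_erase.mpr
        ⟨fun hba => hb (hba ▸ hcoeff.symm), mem_support_iff.mpr fun hb0 => hb ?_⟩
      rw [hb0, eq_comm, ← notMem_support_iff]
      exact fun hbβ => mem_support_iff.mp (hsupp hbβ) hb0
    rw [← sub_add_cancel α β]
    refine J.add_mem (ih _ (I.sub_mem hα (hJI hβ)) ?_) hβ
    have := Finset.card_le_card hsub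
    rw [Finset.card_erase_of_mem ha] at this
    omega

theorem cAnn_sum_monomial_le {ι : Type*} [Fintype ι] {E : ι → σ →₀ ℕ} (hE : E.Injective)
    {J : Ideal (MvPolynomial σ R)} (hJ : J ≤ cAnn (∑ i, monomial (E i) 1))
    (hmono : ∀ a, (∀ i, ¬ a ≤ E i) → monomial a 1 ∈ J)
    (hdiff : ∀ w i j, i ≠ j → w ≤ E i → w ≤ E j →
      monomial (E i - w) 1 - monomial (E j - w) 1 ∈ J) :
    cAnn (∑ i, monomial (E i) (1 : R)) ≤ J := by
  classical
  refine ideal_le_of_forall_exists_coeff_eq hJ fun α hα a ha => ?_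
  by_cases hdom : ∃ r, a ≤ E r
  · obtain ⟨r, hr⟩ := hdom
    set w := E r - a
    -- the terms of `α` that contribute to the coefficient of `x^w` in `α ∘ f`
    refine ⟨∑ i ∈ Finset.univ.filter (w ≤ E ·), coeff (E i - w) α • monomial (E i - w) 1,
      ?_, ?_, ?_⟩
    · refine Submodule.sum_smul_mem_of_sub_mem (J.restrictScalars R) ?_ ?_
      · exact fun i hi j hj hij =>
          hdiff w i j hij (Finset.mem_filter.mp hi).2 (Finset.mem_filter.mp hj).2
      · rw [Finset.sum_filter, ← coeff_cAct_sum_monomial, mem_cAnn.mp hα, coeff_zero]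
    · intro b hb
      rw [mem_support_iff, coeff_sum_coeff_smul_monomial] at hb
      obtain ⟨i, -, hi⟩ := Finset.exists_ne_zero_of_sum_ne_zero hb
      exact mem_support_iff.mpr fun hb0 => hi (by rw [hb0, ite_self])
    · rw [coeff_sum_coeff_smul_monomial, Finset.sum_eq_single r,
        if_pos (tsub_tsub_cancel_of_le hr)]
      · refine fun i hi hir => if_neg fun h => hir (hE ?_)
        exact ((tsub_eq_iff_eq_add_of_le (Finset.mem_filter.mp hi).2).mp h).trans
          (add_tsub_cancel_of_le hr)
      · exact fun h => (h (Finset.mem_filter.mpr ⟨Finset.mem_univ r, tsub_le_self⟩)).elim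
  · push Not at hdom
    refine ⟨monomial a (coeff a α), ?_, ?_, by simp⟩
    · rw [← mul_one (coeff a α), ← smul_eq_mul, ← smul_monomial]
      exact J.smul_of_tower_mem _ (hmono a hdom)
    · exact support_monomial_subset.trans (Finset.singleton_subset_iff.mpr ha)

end Ring

section CWNagata

variable {n m d₁ d₂ : ℕ} {g : Fin (n + 1) → Fin m →₀ ℕ}

variable (d₁ g) in
noncomputable def cwExp (r : Fin (n + 1)) : Fin (n + 1) ⊕ Fin m →₀ ℕ :=
  Finsupp.single (Sum.inl r) d₁ + (g r).mapDomain Sum.inr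

noncomputable def cwNagata (R : Type*) [CommSemiring R] (d₁ : ℕ)
    (g : Fin (n + 1) → Fin m →₀ ℕ) : MvPolynomial (Fin (n + 1) ⊕ Fin m) R :=
  ∑ r, monomial (cwExp d₁ g r) 1

def cwGens (R : Type*) [CommRing R] (d₁ d₂ : ℕ) (g : Fin (n + 1) → Fin m →₀ ℕ) :
    Set (MvPolynomial (Fin (n + 1) ⊕ Fin m) R) :=
  {α : MvPolynomial (Fin (n + 1) ⊕ Fin m) R |
      (∃ i j : Fin (n + 1), i < j ∧ α = X (Sum.inl i) * X (Sum.inl j)) ∨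
      (∃ k : Fin (n + 1), α = X (Sum.inl k) ^ (d₁ + 1)) ∨
      (∃ s : Fin m →₀ ℕ, (∑ k, s k) = d₂ + 1 ∧
        α = monomial (s.mapDomain Sum.inr) 1) ∨
      (∃ s : Fin m →₀ ℕ, 1 ≤ (∑ k, s k) ∧ (∑ k, s k) ≤ d₂ ∧
        (∀ r, ¬ s ≤ g r) ∧ (∀ t, t < s → ∃ r, t ≤ g r) ∧
        α = monomial (s.mapDomain Sum.inr) 1) ∨
      (∃ (r : Fin (n + 1)) (i : Fin m), g r i = 0 ∧
        α = X (Sum.inl r) * X (Sum.inr i)) ∨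
      (∃ (r : Fin (n + 1)) (t : Fin m →₀ ℕ), 1 ≤ (∑ k, t k) ∧ (∑ k, t k) ≤ d₂ ∧
        ¬ t ≤ g r ∧ (∀ t', t' < t → t' ≤ g r) ∧
        α = X (Sum.inl r) * monomial (t.mapDomain Sum.inr) 1) ∨
      (∃ (r s : Fin (n + 1)) (ρ τ : Fin m →₀ ℕ), (∑ k, ρ k) = (∑ k, τ k) ∧
        g r = ρ + (g r ⊓ g s) ∧ g s = τ + (g r ⊓ g s) ∧
        α = X (Sum.inl r) ^ d₁ * monomial (ρ.mapDomain Sum.inr) 1 -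
            X (Sum.inl s) ^ d₁ * monomial (τ.mapDomain Sum.inr) 1)}

@[simp]
theorem cwExp_inl (r s : Fin (n + 1)) : cwExp d₁ g r (Sum.inl s) = if r = s then d₁ else 0 := by
  simp [cwExp, Finsupp.single_apply]

@[simp]
theorem cwExp_inr (r : Fin (n + 1)) (k : Fin m) : cwExp d₁ g r (Sum.inr k) = g r k := by
  simp [cwExp]

theorem cwExp_injective (hd₁ : 0 < d₁) : (cwExp d₁ g).Injective := fun r s h => by
  have := DFunLike.congr_fun h (Sum.inl r)
  simp only [cwExp_inl, if_true] at this
  split_ifs at this with hsr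
  · exact hsr.symm
  · omega

theorem mapDomain_inr_le_cwExp_iff {w : Fin m →₀ ℕ} {r : Fin (n + 1)} :
    w.mapDomain Sum.inr ≤ cwExp d₁ g r ↔ w ≤ g r := by
  simp [Finsupp.le_def, Sum.forall]

theorem single_inl_add_le_cwExp_iff {c : ℕ} (hc : c ≠ 0) {t : Fin m →₀ ℕ} {r s : Fin (n + 1)} :
    Finsupp.single (Sum.inl r) c + t.mapDomain Sum.inr ≤ cwExp d₁ g s ↔
      s = r ∧ c ≤ d₁ ∧ t ≤ g r := by
  simp only [Finsupp.le_def, Sum.forall, Finsupp.add_apply, Finsupp.single_apply, cwExp_inl,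
    cwExp_inr, Finsupp.mapDomain_inr_apply_inl, Finsupp.mapDomain_inr_apply_inr, Sum.inl.injEq,
    reduceCtorEq, if_false, add_zero, zero_add]
  constructor
  · rintro ⟨hx, hu⟩
    have hr := hx r
    rw [if_pos rfl] at hr
    split_ifs at hr with hsr
    · exact ⟨hsr, hr, hsr ▸ hu⟩
    · omega
  · rintro ⟨rfl, hcd, hu⟩
    exact ⟨fun a => by split_ifs <;> omega, hu⟩

theorem cwExp_tsub_mapDomain_inr {r : Fin (n + 1)} {v i : Fin m →₀ ℕ} (hvi : v ≤ i)
    (hi : i ≤ g r) :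
    cwExp d₁ g r - v.mapDomain Sum.inr =
      (i - v).mapDomain Sum.inr +
        (Finsupp.single (Sum.inl r) d₁ + (g r - i).mapDomain Sum.inr) := by
  ext (x | k)
  · simp [Finsupp.single_apply]
  · have := hvi k
    have := hi k
    simp only [Finsupp.tsub_apply, Finsupp.add_apply, cwExp_inr, Finsupp.mapDomain_inr_apply_inr,
      Finsupp.single_apply, reduceCtorEq, if_false]
    omega

variable {R : Type*} [CommRing R]

theorem cAct_X_pow_mul_monomial_cwNagata (hd₁ : 0 < d₁) {r : Fin (n + 1)} {ρ i : Fin m →₀ ℕ}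
    (h : g r = ρ + i) :
    cAct (X (Sum.inl r) ^ d₁ * monomial (ρ.mapDomain Sum.inr) 1) (cwNagata R d₁ g) =
      monomial (i.mapDomain Sum.inr) 1 := by
  rw [cwNagata, ← monomial_single_add, cAct_monomial_sum_monomial_of_unique (r := r)]
  · rw [cwExp, h, Finsupp.mapDomain_add, ← add_assoc, add_tsub_cancel_left]
  · exact (single_inl_add_le_cwExp_iff hd₁.ne').mpr ⟨rfl, le_rfl, h ▸ le_self_add⟩
  · exact fun t ht hle => ht ((single_inl_add_le_cwExp_iff hd₁.ne').mp hle).1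

theorem cwGens_subset_cAnn (hd₁ : 0 < d₁) (hgdeg : ∀ r, (∑ k, g r k) = d₂) :
    cwGens R d₁ d₂ g ⊆ cAnn (cwNagata R d₁ g) := by
  rintro α (⟨i, j, hij, rfl⟩ | ⟨k, rfl⟩ | ⟨s, hs, rfl⟩ | ⟨s, -, -, hs, -, rfl⟩ | ⟨r, i, hri, rfl⟩ |
    ⟨r, t, -, -, ht, -, rfl⟩ | ⟨r, s, ρ, τ, -, hρ, hτ, rfl⟩) <;> rw [SetLike.mem_coe]
  · rw [X_mul_X_eq_monomial]
    refine monomial_mem_cAnn_sum_monomial 1 fun t hle => ?_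
    have hi := hle (Sum.inl i)
    have hj := hle (Sum.inl j)
    simp only [Finsupp.coe_add, Pi.add_apply, Finsupp.single_eq_same, ne_eq, Sum.inl.injEq,
      hij.ne, hij.ne', not_false_eq_true, Finsupp.single_eq_of_ne, add_zero, zero_add,
      cwExp_inl] at hi hj
    split_ifs at hi hj <;> omega
  · rw [X_pow_eq_monomial]
    refine monomial_mem_cAnn_sum_monomial 1 fun t hle => ?_
    have hk := hle (Sum.inl k)
    simp only [Finsupp.single_eq_same, cwExp_inl] at hk
    split_ifs at hk <;> omega
  · refine monomial_mem_cAnn_sum_monomial 1 fun t hle => ?_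
    have := Finset.sum_le_sum fun k (_ : k ∈ Finset.univ) => mapDomain_inr_le_cwExp_iff.mp hle k
    rw [hs, hgdeg t] at this
    omega
  · exact monomial_mem_cAnn_sum_monomial 1 fun t hle => hs t (mapDomain_inr_le_cwExp_iff.mp hle)
  · rw [X_mul_X_eq_monomial, ← Finsupp.mapDomain_single (f := Sum.inr)]
    refine monomial_mem_cAnn_sum_monomial 1 fun t hle => ?_
    have := ((single_inl_add_le_cwExp_iff one_ne_zero).mp hle).2.2
    rw [Finsupp.single_le_iff, hri] at this
    omega
  · rw [← pow_one (X _), ← monomial_single_add]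
    exact monomial_mem_cAnn_sum_monomial 1 fun t' hle =>
      ht ((single_inl_add_le_cwExp_iff one_ne_zero).mp hle).2.2
  · rw [mem_cAnn, cAct_sub_left, cAct_X_pow_mul_monomial_cwNagata hd₁ hρ,
      cAct_X_pow_mul_monomial_cwNagata hd₁ (inf_comm (g r) (g s) ▸ hτ), inf_comm, sub_self]

theorem monomial_single_add_mem_span_cwGens {r : Fin (n + 1)} {c : ℕ} (hc : c ≤ d₁)
    {u : Fin m →₀ ℕ}
    (ha : ∀ t, ¬ Finsupp.single (Sum.inl r) c + u.mapDomain Sum.inr ≤ cwExp d₁ g t) :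
    monomial (Finsupp.single (Sum.inl r) c + u.mapDomain Sum.inr) (1 : R) ∈
      Ideal.span (cwGens R d₁ d₂ g) := by
  by_cases hdeg : d₂ < ∑ k, u k
  · obtain ⟨s, hsu, hs⟩ := Finsupp.exists_le_degree_eq u (d₂ + 1) (by rwa [Finsupp.degree_eq_sum])
    rw [Finsupp.degree_eq_sum] at hs
    exact monomial_mem_span_of_le ((Finsupp.mapDomain_mono hsu).trans le_add_self)
      (Or.inr (Or.inr (Or.inl ⟨s, hs, rfl⟩)))
  push Not at hdeg
  have hsum {s : Fin m →₀ ℕ} (hsu : s ≤ u) : ∑ k, s k ≤ d₂ :=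
    (Finset.sum_le_sum fun k _ => hsu k).trans hdeg
  obtain rfl | hc₀ := eq_or_ne c 0
  · simp only [Finsupp.single_zero, zero_add] at ha ⊢
    have hu : ∀ t, ¬ u ≤ g t := fun t h => ha t (mapDomain_inr_le_cwExp_iff.mpr h)
    obtain ⟨s, hsu, hmin⟩ := exists_minimal_le_of_wellFoundedLT (fun s => ∀ t, ¬ s ≤ g t) u hu
    have hs₀ : s ≠ 0 := by rintro rfl; exact hmin.prop 0 zero_le
    refine monomial_mem_span_of_le (Finsupp.mapDomain_mono hsu)
      (Or.inr (Or.inr (Or.inr (Or.inl ⟨s, Finsupp.one_le_sum_apply_of_ne_zero hs₀, hsum hsu,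
        hmin.prop, fun t ht => ?_, rfl⟩))))
    simpa using hmin.not_prop_of_lt ht
  · have hu : ¬ u ≤ g r := fun h => ha r ((single_inl_add_le_cwExp_iff hc₀).mpr ⟨rfl, hc, h⟩)
    obtain ⟨t, htu, hmin⟩ := exists_minimal_le_of_wellFoundedLT (¬ · ≤ g r) u hu
    have ht₀ : t ≠ 0 := by rintro rfl; exact hmin.prop zero_le
    refine monomial_mem_span_of_le (b := Finsupp.single (Sum.inl r) 1 + t.mapDomain Sum.inr)
      (add_le_add (Finsupp.single_le_single.mpr (Nat.one_le_iff_ne_zero.mpr hc₀))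
        (Finsupp.mapDomain_mono htu))
      (Or.inr (Or.inr (Or.inr (Or.inr (Or.inr (Or.inl ⟨r, t,
        Finsupp.one_le_sum_apply_of_ne_zero ht₀, hsum htu, hmin.prop,
        fun t' ht' => not_not.mp (hmin.not_prop_of_lt ht'), ?_⟩))))))
    rw [monomial_single_add, pow_one]

theorem monomial_mem_span_cwGens {a : Fin (n + 1) ⊕ Fin m →₀ ℕ}
    (ha : ∀ r, ¬ a ≤ cwExp d₁ g r) : monomial a (1 : R) ∈ Ideal.span (cwGens R d₁ d₂ g) := by
  by_cases h₁ : ∃ i j, i < j ∧ a (Sum.inl i) ≠ 0 ∧ a (Sum.inl j) ≠ 0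
  · obtain ⟨i, j, hij, hi, hj⟩ := h₁
    refine monomial_mem_span_of_le ?_ (Or.inl ⟨i, j, hij, (X_mul_X_eq_monomial _ _).symm⟩)
    rintro (x | k)
    · simp only [Finsupp.add_apply, Finsupp.single_apply, Sum.inl.injEq]
      split_ifs <;> subst_vars <;> omega
    · simp
  push Not at h₁
  by_cases h₂ : ∃ k, d₁ < a (Sum.inl k)
  · obtain ⟨k, hk⟩ := h₂
    exact monomial_mem_span_of_le (Finsupp.single_le_iff.mpr hk)
      (Or.inr (Or.inl ⟨k, X_pow_eq_monomial.symm⟩))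
  push Not at h₂
  obtain ⟨r, hr⟩ : ∃ r, ∀ s ≠ r, a (Sum.inl s) = 0 := by
    by_cases h : ∃ r, a (Sum.inl r) ≠ 0
    · obtain ⟨r, hr⟩ := h
      refine ⟨r, fun s hs => by_contra fun hs' => ?_⟩
      rcases hs.lt_or_gt with hsr | hrs
      · exact hr (h₁ s r hsr hs')
      · exact hs' (h₁ r s hrs hr)
    · push Not at h
      exact ⟨0, fun s _ => h s⟩
  obtain ⟨u, hu⟩ := Finsupp.exists_eq_single_inl_add_mapDomain_inr a hr
  have hc := h₂ r
  set c := a (Sum.inl r)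
  rw [hu] at ha ⊢
  exact monomial_single_add_mem_span_cwGens hc ha

theorem monomial_cwExp_tsub_sub_mem_span_cwGens (hgdeg : ∀ r, (∑ k, g r k) = d₂)
    {w : Fin (n + 1) ⊕ Fin m →₀ ℕ} {r s : Fin (n + 1)} (hrs : r ≠ s)
    (hr : w ≤ cwExp d₁ g r) (hs : w ≤ cwExp d₁ g s) :
    monomial (cwExp d₁ g r - w) 1 - monomial (cwExp d₁ g s - w) 1 ∈
      Ideal.span (cwGens R d₁ d₂ g) := by
  obtain ⟨v, rfl⟩ : ∃ v : Fin m →₀ ℕ, w = v.mapDomain Sum.inr := by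
    refine Finsupp.exists_eq_mapDomain_inr w fun x => ?_
    have hrx := hr (Sum.inl x)
    have hsx := hs (Sum.inl x)
    simp only [cwExp_inl] at hrx hsx
    split_ifs at hrx hsx <;> omega
  rw [mapDomain_inr_le_cwExp_iff] at hr hs
  set i := g r ⊓ g s
  have hvi : v ≤ i := le_inf hr hs
  have hsum : ∀ t, i ≤ g t → ∑ k, (g t - i) k + ∑ k, i k = d₂ := fun t hi => by
    rw [← hgdeg t, ← Finset.sum_add_distrib]
    exact Finset.sum_congr rfl fun k _ => tsub_add_cancel_of_le (hi k)
  have hgen : X (Sum.inl r) ^ d₁ * monomial ((g r - i).mapDomain Sum.inr) 1 -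
      X (Sum.inl s) ^ d₁ * monomial ((g s - i).mapDomain Sum.inr) (1 : R) ∈ cwGens R d₁ d₂ g :=
    Or.inr <| Or.inr <| Or.inr <| Or.inr <| Or.inr <| Or.inr
      ⟨r, s, g r - i, g s - i, by have := hsum r inf_le_left; have := hsum s inf_le_right; omega,
        (tsub_add_cancel_of_le inf_le_left).symm, (tsub_add_cancel_of_le inf_le_right).symm, rfl⟩
  rw [cwExp_tsub_mapDomain_inr hvi inf_le_left, cwExp_tsub_mapDomain_inr hvi inf_le_right,
    ← mul_one (1 : R), ← monomial_mul, ← monomial_mul, ← mul_sub, monomial_single_add,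
    monomial_single_add]
  exact Ideal.mul_mem_left _ _ (Ideal.subset_span hgen)

theorem cAnn_cwNagata (hd₁ : 0 < d₁) (hgdeg : ∀ r, (∑ k, g r k) = d₂) :
    cAnn (cwNagata R d₁ g) = Ideal.span (cwGens R d₁ d₂ g) := by
  have hspan := Ideal.span_le.mpr (cwGens_subset_cAnn (R := R) hd₁ hgdeg)
  exact le_antisymm (cAnn_sum_monomial_le (cwExp_injective hd₁) hspan
    (fun a ha => monomial_mem_span_cwGens ha)
    (fun w r s hrs hr hs => monomial_cwExp_tsub_sub_mem_span_cwGens hgdeg hrs hr hs)) hspan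

end CWNagata

open MvPolynomial in
theorem stmt_4_general {K : Type*} [Field K] (n m d₁ d₂ : ℕ)
    (hd₁ : 1 ≤ d₁)
    (g : Fin (n + 1) → (Fin m →₀ ℕ))
    (hgdeg : ∀ r, (∑ k, g r k) = d₂)
    (f : MvPolynomial (Fin (n + 1) ⊕ Fin m) K)
    (hf : f = ∑ r, X (Sum.inl r) ^ d₁ * monomial ((g r).mapDomain Sum.inr) 1) :
    cAnn f = Ideal.span {α : MvPolynomial (Fin (n + 1) ⊕ Fin m) K |
      -- (1) the products `X_i X_j` (`i < j`) and the powers `X_k^{d₁+1}`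
      (∃ i j : Fin (n + 1), i < j ∧ α = X (Sum.inl i) * X (Sum.inl j)) ∨
      (∃ k : Fin (n + 1), α = X (Sum.inl k) ^ (d₁ + 1)) ∨
      -- (2) all monic monomials of degree `d₂ + 1` in the `U`'s
      (∃ s : Fin m →₀ ℕ, (∑ k, s k) = d₂ + 1 ∧
        α = monomial (s.mapDomain Sum.inr) 1) ∨
      -- (3) the monomials `U^s` of degree `1 ≤ j ≤ d₂` dividing no `g_r`,
      -- minimal with this property
      (∃ s : Fin m →₀ ℕ, 1 ≤ (∑ k, s k) ∧ (∑ k, s k) ≤ d₂ ∧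
        (∀ r, ¬ s ≤ g r) ∧ (∀ t, t < s → ∃ r, t ≤ g r) ∧
        α = monomial (s.mapDomain Sum.inr) 1) ∨
      -- (4) the monomials `X_r U_i` where `u_i` does not divide `g_r`
      (∃ (r : Fin (n + 1)) (i : Fin m), g r i = 0 ∧
        α = X (Sum.inl r) * X (Sum.inr i)) ∨
      -- (5) the monomials `X_r U^t`, `t` of degree `1 ≤ j ≤ d₂` minimal among the
      -- monomials not dividing `g_r`
      (∃ (r : Fin (n + 1)) (t : Fin m →₀ ℕ), 1 ≤ (∑ k, t k) ∧ (∑ k, t k) ≤ d₂ ∧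
        ¬ t ≤ g r ∧ (∀ t', t' < t → t' ≤ g r) ∧
        α = X (Sum.inl r) * monomial (t.mapDomain Sum.inr) 1) ∨
      -- (6) the binomials `X_r^{d₁} U^ρ − X_s^{d₁} U^σ` with
      -- `g_r = u^ρ·gcd(g_r,g_s)`, `g_s = u^σ·gcd(g_r,g_s)`
      (∃ (r s : Fin (n + 1)) (ρ τ : Fin m →₀ ℕ), (∑ k, ρ k) = (∑ k, τ k) ∧
        g r = ρ + (g r ⊓ g s) ∧ g s = τ + (g r ⊓ g s) ∧
        α = X (Sum.inl r) ^ d₁ * monomial (ρ.mapDomain Sum.inr) 1 -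
            X (Sum.inl s) ^ d₁ * monomial (τ.mapDomain Sum.inr) 1)} := by
  have hf' : f = cwNagata K d₁ g := by
    simp only [hf, cwNagata, cwExp, monomial_single_add]
  rw [hf']
  exact cAnn_cwNagata hd₁ hgdeg

open MvPolynomial in
theorem stmt_4 {K : Type*} [Field K] [CharZero K] (n m d₁ d₂ : ℕ)
    (hd₁ : 1 ≤ d₁) (hd₂ : 2 ≤ d₂)
    (g : Fin (n + 1) → (Fin m →₀ ℕ))
    (hgdeg : ∀ r, (∑ k, g r k) = d₂)
    (hginj : Function.Injective g)
    (f : MvPolynomial (Fin (n + 1) ⊕ Fin m) K)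
    (hf : f = ∑ r, X (Sum.inl r) ^ d₁ * monomial ((g r).mapDomain Sum.inr) 1) :
    cAnn f = Ideal.span {α : MvPolynomial (Fin (n + 1) ⊕ Fin m) K |
      -- (1) the products `X_i X_j` (`i < j`) and the powers `X_k^{d₁+1}`
      (∃ i j : Fin (n + 1), i < j ∧ α = X (Sum.inl i) * X (Sum.inl j)) ∨
      (∃ k : Fin (n + 1), α = X (Sum.inl k) ^ (d₁ + 1)) ∨
      -- (2) all monic monomials of degree `d₂ + 1` in the `U`'s
      (∃ s : Fin m →₀ ℕ, (∑ k, s k) = d₂ + 1 ∧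
        α = monomial (s.mapDomain Sum.inr) 1) ∨
      -- (3) the monomials `U^s` of degree `1 ≤ j ≤ d₂` dividing no `g_r`,
      -- minimal with this property
      (∃ s : Fin m →₀ ℕ, 1 ≤ (∑ k, s k) ∧ (∑ k, s k) ≤ d₂ ∧
        (∀ r, ¬ s ≤ g r) ∧ (∀ t, t < s → ∃ r, t ≤ g r) ∧
        α = monomial (s.mapDomain Sum.inr) 1) ∨
      -- (4) the monomials `X_r U_i` where `u_i` does not divide `g_r`
      (∃ (r : Fin (n + 1)) (i : Fin m), g r i = 0 ∧
        α = X (Sum.inl r) * X (Sum.inr i)) ∨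
      -- (5) the monomials `X_r U^t`, `t` of degree `1 ≤ j ≤ d₂` minimal among the
      -- monomials not dividing `g_r`
      (∃ (r : Fin (n + 1)) (t : Fin m →₀ ℕ), 1 ≤ (∑ k, t k) ∧ (∑ k, t k) ≤ d₂ ∧
        ¬ t ≤ g r ∧ (∀ t', t' < t → t' ≤ g r) ∧
        α = X (Sum.inl r) * monomial (t.mapDomain Sum.inr) 1) ∨
      -- (6) the binomials `X_r^{d₁} U^ρ − X_s^{d₁} U^σ` with
      -- `g_r = u^ρ·gcd(g_r,g_s)`, `g_s = u^σ·gcd(g_r,g_s)`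
      (∃ (r s : Fin (n + 1)) (ρ τ : Fin m →₀ ℕ), (∑ k, ρ k) = (∑ k, τ k) ∧
        g r = ρ + (g r ⊓ g s) ∧ g s = τ + (g r ⊓ g s) ∧
        α = X (Sum.inl r) ^ d₁ * monomial (ρ.mapDomain Sum.inr) 1 -
            X (Sum.inl s) ^ d₁ * monomial (τ.mapDomain Sum.inr) 1)} :=
  stmt_4_general n m d₁ d₂ hd₁ g hgdeg f hf

end CW
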